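/- arXiv:2407.10293 — 3 statements merged into one kernel-verified Lean document; each statement's English description precedes it below -/
import Mathlib

section
/- If L:[0,T]→[0,∞) is a continuous increasing function satisfying L(t) ≤ A·e^{B·t·L(t)} for all t∈[0,T], where A,B>0, then L(t) ≤ e·A for all 0 ≤ t ≤ min{T, 1/(e·A·B)}. -/
open Set Real

/-- If `L : [0,T] → [0,∞)` is continuous, increasing and satisfies
`L t ≤ A * exp (B * t * L t)` on `[0,T]` with `A, B > 0`, then
`L t ≤ e * A` for `0 ≤ t ≤ min T (1/(e*A*B))`. -/
theorem stmt0 (T A B : ℝ) (hT : 0 < T) (hA : 0 < A) (hB : 0 < B)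
    (L : ℝ → ℝ)
    (hL0 : ∀ t ∈ Icc (0:ℝ) T, 0 ≤ L t)
    (hcont : ContinuousOn L (Icc 0 T))
    (hmono : MonotoneOn L (Icc 0 T))
    (hineq : ∀ t ∈ Icc (0:ℝ) T, L t ≤ A * Real.exp (B * t * L t)) :
    ∀ t ∈ Icc (0:ℝ) (min T (1 / (Real.exp 1 * A * B))), L t ≤ Real.exp 1 * A := by
  intro t ht
  obtain ⟨ht0, ht1⟩ := ht
  have hE : (0:ℝ) < Real.exp 1 := Real.exp_pos 1
  have htT : t ≤ T := le_trans ht1 (min_le_left _ _)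
  have htstar : t ≤ 1 / (Real.exp 1 * A * B) := le_trans ht1 (min_le_right _ _)
  have htm : t ∈ Icc (0:ℝ) T := ⟨ht0, htT⟩
  have hg : B * t * L t ≤ 1 := by
    by_contra hgt
    push_neg at hgt
    have hcont' : ContinuousOn (fun s => B * s * L s) (Icc 0 t) := by
      have hsub : Icc (0:ℝ) t ⊆ Icc 0 T := Icc_subset_Icc le_rfl htT
      exact (continuousOn_const.mul continuousOn_id).mul (hcont.mono hsub)
    have h01 : (1:ℝ) ∈ Icc (B * 0 * L 0) (B * t * L t) := by
      constructor
      · simp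
      · exact hgt.le
    obtain ⟨s, hs, hgs⟩ := intermediate_value_Icc ht0 hcont' h01
    simp only at hgs
    have hsT : s ∈ Icc (0:ℝ) T := ⟨hs.1, le_trans hs.2 htT⟩
    have hLs : L s ≤ A * Real.exp 1 := by
      have := hineq s hsT
      rwa [hgs] at this
    have hL := hL0 s hsT
    have hs_ge : 1 / (Real.exp 1 * A * B) ≤ s := by
      have h1 : (1:ℝ) ≤ B * s * (A * Real.exp 1) := by
        nlinarith [mul_le_mul_of_nonneg_left hLs (mul_nonneg hB.le hs.1)]
      rw [div_le_iff₀ (by positivity)]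
      nlinarith
    have hst : s = t := le_antisymm hs.2 (le_trans htstar hs_ge)
    rw [hst] at hgs
    linarith
  calc L t ≤ A * Real.exp (B * t * L t) := hineq t htm
    _ ≤ A * Real.exp 1 := by
        exact mul_le_mul_of_nonneg_left (Real.exp_le_exp.mpr hg) hA.le
    _ = Real.exp 1 * A := mul_comm _ _
end

section
/- Let φ(v) = e^{ρ⟨v⟩^β} on ℝ³ with ρ>0 and β∈(0,1], and let μ>0. Then there exists a constant C depending only on ρ, β, μ such that for any measurable h:ℝ³→ℝ with √φ·h ∈ L², the function v ↦ φ(v)^{-1/2}·∫_{ℝ³}|v-w|^μ h(w) dw belongs to L²(ℝ³) with ‖φ^{-1/2}(h ∗ |·|^μ)‖_{L²} ≤ C‖√φ·h‖_{L²}. -/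
/-!
Since `‖v - w‖ ≤ 2 ⟨v⟩ ⟨w⟩`, the convolution is bounded pointwise by
`2^μ ⟨v⟩^μ ∫ ⟨w⟩^μ |h w| dw`, and Cauchy–Schwarz with the weight `φ` bounds the square of the last
integral by `A · ∫ φ h²`, where `A = ∫ ⟨w⟩^{2μ} / φ(w)` is finite because `φ` outgrows every power
of `⟨w⟩`. Integrating the square of the pointwise bound against `1 / φ` gives the estimate with
`C = 2^μ A`.
-/

open MeasureTheory

/-- The sub-exponential weight `φ(v) = exp (ρ ⟨v⟩^β)`. -/
noncomputable def phiw (ρ β : ℝ) (v : EuclideanSpace ℝ (Fin 3)) : ℝ :=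
  Real.exp (ρ * Real.sqrt (1 + ‖v‖ ^ 2) ^ β)

open Module
open scoped Nat

theorem exists_rpow_le_mul_exp {ρ : ℝ} (hρ : 0 < ρ) (p : ℝ) :
    ∃ M, ∀ u : ℝ, 1 ≤ u → u ^ p ≤ M * Real.exp (ρ * u) := by
  set n := ⌈p⌉₊
  refine ⟨n ! / ρ ^ n, fun u hu => ?_⟩
  calc u ^ p ≤ u ^ (n : ℝ) := Real.rpow_le_rpow_of_exponent_le hu (Nat.le_ceil p)
    _ = n ! / ρ ^ n * ((ρ * u) ^ n / n !) := by
      rw [Real.rpow_natCast, mul_pow]; field_simp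
    _ ≤ n ! / ρ ^ n * Real.exp (ρ * u) := by
      gcongr; exact Real.pow_div_factorial_le_exp _ (by positivity) n

section JapaneseBracket

variable {E : Type*} [NormedAddCommGroup E]

theorem one_le_sqrt_one_add_norm_sq (x : E) : 1 ≤ √(1 + ‖x‖ ^ 2) :=
  Real.one_le_sqrt.2 (le_add_of_nonneg_right (by positivity))

theorem norm_le_sqrt_one_add_norm_sq (x : E) : ‖x‖ ≤ √(1 + ‖x‖ ^ 2) :=
  Real.le_sqrt_of_sq_le (by linarith)

theorem norm_sub_rpow_le {μ : ℝ} (hμ : 0 ≤ μ) (x y : E) :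
    ‖x - y‖ ^ μ ≤ 2 ^ μ * √(1 + ‖x‖ ^ 2) ^ μ * √(1 + ‖y‖ ^ 2) ^ μ := by
  have hx := one_le_sqrt_one_add_norm_sq x
  have hy := one_le_sqrt_one_add_norm_sq y
  have hxy : ‖x - y‖ ≤ 2 * √(1 + ‖x‖ ^ 2) * √(1 + ‖y‖ ^ 2) := by
    nlinarith [norm_sub_le x y, norm_le_sqrt_one_add_norm_sq x, norm_le_sqrt_one_add_norm_sq y]
  calc ‖x - y‖ ^ μ ≤ (2 * √(1 + ‖x‖ ^ 2) * √(1 + ‖y‖ ^ 2)) ^ μ :=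
        Real.rpow_le_rpow (norm_nonneg _) hxy hμ
    _ = 2 ^ μ * √(1 + ‖x‖ ^ 2) ^ μ * √(1 + ‖y‖ ^ 2) ^ μ := by
        rw [Real.mul_rpow (by positivity) (by positivity),
          Real.mul_rpow (by norm_num) (by positivity)]

theorem integrable_rpow_sqrt_one_add_norm_sq_div_exp [NormedSpace ℝ E] [FiniteDimensional ℝ E]
    [MeasurableSpace E] [BorelSpace E] (ν : Measure E) [ν.IsAddHaarMeasure] {ρ β : ℝ}
    (hρ : 0 < ρ) (hβ : 0 < β) (p : ℝ) :
    Integrable (fun x => √(1 + ‖x‖ ^ 2) ^ p / Real.exp (ρ * √(1 + ‖x‖ ^ 2) ^ β)) ν := by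
  set r : ℝ := finrank ℝ E + 1
  obtain ⟨M, hM⟩ := exists_rpow_le_mul_exp hρ ((p + r) / β)
  refine ((integrable_rpow_neg_one_add_norm_sq (μ := ν) (r := r) (by linarith)).const_mul M).mono'
    (by fun_prop : Measurable _).aestronglyMeasurable (ae_of_all _ fun x => ?_)
  have hbracket : (1 + ‖x‖ ^ 2) ^ (-r / 2) = √(1 + ‖x‖ ^ 2) ^ (-r) := by
    rw [Real.sqrt_eq_rpow, ← Real.rpow_mul (by positivity)]; ring_nf
  set s := √(1 + ‖x‖ ^ 2)
  have hs : 1 ≤ s := one_le_sqrt_one_add_norm_sq x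
  have hs0 : 0 < s := by linarith
  have hdom : s ^ (p + r) ≤ M * Real.exp (ρ * s ^ β) := by
    have := hM (s ^ β) (Real.one_le_rpow hs hβ.le)
    rwa [← Real.rpow_mul hs0.le, mul_div_cancel₀ _ hβ.ne'] at this
  rw [Real.norm_of_nonneg (by positivity), hbracket, div_le_iff₀ (Real.exp_pos _)]
  calc s ^ p = s ^ (p + r) * s ^ (-r) := by rw [← Real.rpow_add hs0]; ring_nf
    _ ≤ M * Real.exp (ρ * s ^ β) * s ^ (-r) := by gcongr
    _ = M * s ^ (-r) * Real.exp (ρ * s ^ β) := by ring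

end JapaneseBracket

section Weighted

variable {α : Type*} [MeasurableSpace α] {ν : Measure α}

theorem sq_integral_mul_le {f g : α → ℝ} (hf : MemLp f 2 ν) (hg : MemLp g 2 ν) :
    (∫ x, f x * g x ∂ν) ^ 2 ≤ (∫ x, f x ^ 2 ∂ν) * ∫ x, g x ^ 2 ∂ν := by
  have h2 : ENNReal.ofReal 2 = 2 := by norm_num
  have hHolder := integral_mul_le_Lp_mul_Lq_of_nonneg Real.HolderConjugate.two_two
    (ae_of_all _ fun x => abs_nonneg (f x)) (ae_of_all _ fun x => abs_nonneg (g x))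
    (h2 ▸ hf.abs) (h2 ▸ hg.abs)
  simp only [Real.rpow_two, sq_abs] at hHolder
  have hsqrt : ∀ {t : ℝ}, 0 ≤ t → (t ^ (1 / 2 : ℝ)) ^ 2 = t := fun ht => by
    rw [← Real.sqrt_eq_rpow, Real.sq_sqrt ht]
  calc (∫ x, f x * g x ∂ν) ^ 2 ≤ (∫ x, |f x| * |g x| ∂ν) ^ 2 := by
        rw [← sq_abs]
        refine pow_le_pow_left₀ (abs_nonneg _) ?_ 2
        exact abs_integral_le_integral_abs.trans_eq (by simp only [abs_mul])
    _ ≤ ((∫ x, f x ^ 2 ∂ν) ^ (1 / 2 : ℝ) * (∫ x, g x ^ 2 ∂ν) ^ (1 / 2 : ℝ)) ^ 2 :=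
        pow_le_pow_left₀ (integral_nonneg fun x => by positivity) hHolder 2
    _ = (∫ x, f x ^ 2 ∂ν) * ∫ x, g x ^ 2 ∂ν := by
        rw [mul_pow, hsqrt (integral_nonneg fun x => by positivity),
          hsqrt (integral_nonneg fun x => by positivity)]

theorem integrable_mul_and_sq_integral_mul_le_of_weight {a w h : α → ℝ} (hw : ∀ x, 0 < w x)
    (ha : AEMeasurable a ν) (hwm : AEMeasurable w ν) (hh : AEMeasurable h ν)
    (haw : Integrable (fun x => a x ^ 2 / w x) ν)
    (hwh : Integrable (fun x => w x * h x ^ 2) ν) :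
    Integrable (fun x => a x * h x) ν ∧
      (∫ x, a x * h x ∂ν) ^ 2 ≤ (∫ x, a x ^ 2 / w x ∂ν) * ∫ x, w x * h x ^ 2 ∂ν := by
  have hsqrt : AEMeasurable (fun x => √(w x)) ν := hwm.sqrt
  have hf : MemLp (fun x => a x / √(w x)) 2 ν :=
    (memLp_two_iff_integrable_sq (ha.div hsqrt).aestronglyMeasurable).2
      (by simpa only [Pi.div_apply, div_pow, Real.sq_sqrt (hw _).le] using haw)
  have hg : MemLp (fun x => √(w x) * h x) 2 ν :=
    (memLp_two_iff_integrable_sq (hsqrt.mul hh).aestronglyMeasurable).2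
      (by simpa only [Pi.mul_apply, mul_pow, Real.sq_sqrt (hw _).le] using hwh)
  have hfg : (fun x => a x / √(w x) * (√(w x) * h x)) = fun x => a x * h x := by
    ext x; field_simp [(Real.sqrt_pos.2 (hw x)).ne']
  refine ⟨hfg ▸ hf.integrable_mul hg, ?_⟩
  simpa only [hfg, div_pow, mul_pow, Real.sq_sqrt (hw _).le] using sq_integral_mul_le hf hg

theorem integrable_inv_mul_sq_and_integral_le {F a w : α → ℝ} {c : ℝ} (hw : ∀ x, 0 < w x)
    (hwm : AEMeasurable w ν) (hF : AEMeasurable F ν)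
    (ha : Integrable (fun x => a x ^ 2 / w x) ν) (hFa : ∀ x, |F x| ≤ c * a x) :
    Integrable (fun x => (w x)⁻¹ * F x ^ 2) ν ∧
      ∫ x, (w x)⁻¹ * F x ^ 2 ∂ν ≤ c ^ 2 * ∫ x, a x ^ 2 / w x ∂ν := by
  have hpt : ∀ x, (w x)⁻¹ * F x ^ 2 ≤ c ^ 2 * (a x ^ 2 / w x) := fun x => by
    have hsq : F x ^ 2 ≤ (c * a x) ^ 2 := sq_le_sq.2 ((hFa x).trans (le_abs_self _))
    calc (w x)⁻¹ * F x ^ 2 ≤ (w x)⁻¹ * (c * a x) ^ 2 := by gcongr; exact (inv_pos.2 (hw x)).le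
      _ = c ^ 2 * (a x ^ 2 / w x) := by ring
  have hI : Integrable (fun x => (w x)⁻¹ * F x ^ 2) ν :=
    (ha.const_mul (c ^ 2)).mono' (hwm.inv.mul (hF.pow_const 2)).aestronglyMeasurable
      (ae_of_all _ fun x => by
        rw [Real.norm_of_nonneg (mul_nonneg (inv_pos.2 (hw x)).le (sq_nonneg _))]; exact hpt x)
  refine ⟨hI, ?_⟩
  rw [← integral_const_mul]
  exact integral_mono hI (ha.const_mul _) hpt

end Weighted

section Convolution

variable {E : Type*} [NormedAddCommGroup E] [MeasurableSpace E]

theorem abs_integral_norm_sub_rpow_mul_le (ν : Measure E) {μ : ℝ} (hμ : 0 ≤ μ) {h : E → ℝ}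
    (hh : Integrable (fun w => √(1 + ‖w‖ ^ 2) ^ μ * |h w|) ν) (v : E) :
    |∫ w, ‖v - w‖ ^ μ * h w ∂ν| ≤
      (2 ^ μ * ∫ w, √(1 + ‖w‖ ^ 2) ^ μ * |h w| ∂ν) * √(1 + ‖v‖ ^ 2) ^ μ := by
  calc |∫ w, ‖v - w‖ ^ μ * h w ∂ν| ≤ ∫ w, |‖v - w‖ ^ μ * h w| ∂ν := abs_integral_le_integral_abs
    _ ≤ ∫ w, 2 ^ μ * √(1 + ‖v‖ ^ 2) ^ μ * (√(1 + ‖w‖ ^ 2) ^ μ * |h w|) ∂ν := by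
        refine integral_mono_of_nonneg (ae_of_all _ fun w => abs_nonneg _) (hh.const_mul _)
          (ae_of_all _ fun w => ?_)
        dsimp only
        rw [abs_mul, abs_of_nonneg (by positivity), ← mul_assoc]
        gcongr
        exact norm_sub_rpow_le hμ v w
    _ = (2 ^ μ * ∫ w, √(1 + ‖w‖ ^ 2) ^ μ * |h w| ∂ν) * √(1 + ‖v‖ ^ 2) ^ μ := by
        rw [integral_const_mul]; ring

theorem stronglyMeasurable_integral_norm_sub_rpow_mul [BorelSpace E] [SecondCountableTopology E]
    (ν : Measure E) [SFinite ν] (μ : ℝ) {h : E → ℝ} (hh : Measurable h) :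
    StronglyMeasurable fun v => ∫ w, ‖v - w‖ ^ μ * h w ∂ν :=
  (show StronglyMeasurable fun p : E × E => ‖p.1 - p.2‖ ^ μ * h p.2 by
    fun_prop).integral_prod_right'

end Convolution

theorem integrable_rpow_sq_div_phiw {ρ β : ℝ} (hρ : 0 < ρ) (hβ : 0 < β) (μ : ℝ) :
    Integrable fun v => (√(1 + ‖v‖ ^ 2) ^ μ) ^ 2 / phiw ρ β v := by
  convert integrable_rpow_sqrt_one_add_norm_sq_div_exp (E := EuclideanSpace ℝ (Fin 3)) volume
    hρ hβ (μ * 2) using 2 with v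
  rw [phiw, ← Real.rpow_natCast, ← Real.rpow_mul (by positivity)]
  norm_num

theorem stmt2_general (ρ β μ : ℝ) (hρ : 0 < ρ) (hβ0 : 0 < β) (hμ : 0 < μ) :
    ∃ C > (0:ℝ), ∀ h : EuclideanSpace ℝ (Fin 3) → ℝ, Measurable h →
      Integrable (fun v => phiw ρ β v * h v ^ 2) →
      Integrable (fun v => (phiw ρ β v)⁻¹ * (∫ w, ‖v - w‖ ^ μ * h w) ^ 2) ∧
      (∫ v, (phiw ρ β v)⁻¹ * (∫ w, ‖v - w‖ ^ μ * h w) ^ 2)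
        ≤ C ^ 2 * ∫ v, phiw ρ β v * h v ^ 2 := by
  have hφ : ∀ v, 0 < phiw ρ β v := fun v => Real.exp_pos _
  have hφm : AEMeasurable (phiw ρ β) := by unfold phiw; fun_prop
  have hA := integrable_rpow_sq_div_phiw hρ hβ0 μ
  set A := ∫ v, (√(1 + ‖v‖ ^ 2) ^ μ) ^ 2 / phiw ρ β v
  have hA_pos : 0 < A := (integral_pos_iff_support_of_nonneg
    (fun v => (div_pos (by positivity) (hφ v)).le) hA).2 (by
      simp [Function.support, (hφ _).ne',
        (Real.rpow_pos_of_pos (zero_lt_one.trans_le (one_le_sqrt_one_add_norm_sq _)) μ).ne'])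
  refine ⟨2 ^ μ * A, by positivity, fun h hh hφh => ?_⟩
  obtain ⟨hI, hIA⟩ := integrable_mul_and_sq_integral_mul_le_of_weight hφ (by fun_prop) hφm
    hh.abs.aemeasurable hA (by simpa only [sq_abs] using hφh)
  simp only [sq_abs] at hIA
  obtain ⟨hint, hle⟩ := integrable_inv_mul_sq_and_integral_le hφ hφm
    (stronglyMeasurable_integral_norm_sub_rpow_mul volume μ hh).measurable.aemeasurable hA
    (abs_integral_norm_sub_rpow_mul_le volume hμ.le hI)
  refine ⟨hint, hle.trans ?_⟩
  calc (2 ^ μ * ∫ w, √(1 + ‖w‖ ^ 2) ^ μ * |h w|) ^ 2 * A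
      = (2 ^ μ) ^ 2 * A * (∫ w, √(1 + ‖w‖ ^ 2) ^ μ * |h w|) ^ 2 := by ring
    _ ≤ (2 ^ μ) ^ 2 * A * (A * ∫ v, phiw ρ β v * h v ^ 2) := by gcongr
    _ = (2 ^ μ * A) ^ 2 * ∫ v, phiw ρ β v * h v ^ 2 := by ring

/-- `‖φ^{-1/2} (h ∗ |·|^μ)‖_{L²} ≤ C ‖√φ h‖_{L²}` with `C = C(ρ,β,μ)`,
stated with squared `L²` norms. -/
theorem stmt2 (ρ β μ : ℝ) (hρ : 0 < ρ) (hβ0 : 0 < β) (hβ1 : β ≤ 1) (hμ : 0 < μ) :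
    ∃ C > (0:ℝ), ∀ h : EuclideanSpace ℝ (Fin 3) → ℝ, Measurable h →
      Integrable (fun v => phiw ρ β v * h v ^ 2) →
      Integrable (fun v => (phiw ρ β v)⁻¹ * (∫ w, ‖v - w‖ ^ μ * h w) ^ 2) ∧
      (∫ v, (phiw ρ β v)⁻¹ * (∫ w, ‖v - w‖ ^ μ * h w) ^ 2)
        ≤ C ^ 2 * ∫ v, phiw ρ β v * h v ^ 2 :=
  stmt2_general ρ β μ hρ hβ0 hμ
end

section
/- Let f:ℝ³→[0,∞) satisfy f(v)≥δ for all v∈B_r(v₀), where δ,r>0 and v₀∈ℝ³. Then for all v∈ℝ³ and ξ∈ℝ³, the matrix ā^f(v) = a_γ∫_{ℝ³}(I - w⊗w/|w|²)|w|^{γ+2} f(v-w)dw satisfies ā^f_{ij}(v)ξ_iξ_j ≥ c₁|ξ|²(1+|v|)^γ if ξ∥v and ā^f_{ij}(v)ξ_iξ_j ≥ c₁|ξ|²(1+|v|)^{γ+2} if ξ⊥v, where c₁>0 depends only on δ, r, |v₀|, γ, a_γ. -/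
/-!
Contracting `ā^f(v)` with `ξ` gives `a_γ ∫ |w|^γ (|ξ|²|w|² - (w·ξ)²) f(v - w) dw`, whose integrand is
nonnegative. For a unit vector `u ⊥ ξ` the bracket is at least `|ξ|² (w·u)²`, so it suffices to
integrate over the ball `B` of radius `r/4` around `z + (r/2) u`, `z = v - v₀`: it lies in
`{w | f(v - w) ≥ δ}`, and on it `w·u ≥ z·u + r/4` and `|w| ≥ |v| - |v₀| - r`. Choosing `u` to
maximise `z·u` among unit vectors orthogonal to `ξ` makes `z·u ≥ 0`, and `z·u ≥ |v| - |v₀|` when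
`ξ ⊥ v`, since then `v` itself competes. Hence `|w|^γ (w·u)²` is bounded below on `B` by a multiple
of `(1 + |v|)^γ` in general and of `(1 + |v|)^(γ+2)` when `ξ ⊥ v`.
-/

open MeasureTheory RealInnerProductSpace

/-- Entry `(i,j)` of the matrix
`ā^f(v) = a_γ ∫ (I - w⊗w/|w|²) |w|^{γ+2} f(v-w) dw`. -/
noncomputable def abarEntry (aγ γ : ℝ) (f : EuclideanSpace ℝ (Fin 3) → ℝ)
    (v : EuclideanSpace ℝ (Fin 3)) (i j : Fin 3) : ℝ :=
  aγ * ∫ w : EuclideanSpace ℝ (Fin 3),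
    ((if i = j then (1:ℝ) else 0) - w i * w j / ‖w‖ ^ 2) * ‖w‖ ^ (γ + 2) * f (v - w)

theorem one_add_rpow_le {t p : ℝ} (ht : 0 ≤ t) (hp : 0 ≤ p) :
    (1 + t) ^ p ≤ 2 ^ p * (1 + t ^ p) := by
  rcases le_total t 1 with h | h
  · calc (1 + t) ^ p ≤ 2 ^ p := Real.rpow_le_rpow (by positivity) (by linarith) hp
      _ ≤ 2 ^ p * (1 + t ^ p) :=
        le_mul_of_one_le_right (by positivity) (by linarith [Real.rpow_nonneg ht p])
  · calc (1 + t) ^ p ≤ (2 * t) ^ p := Real.rpow_le_rpow (by positivity) (by linarith) hp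
      _ = 2 ^ p * t ^ p := Real.mul_rpow (by norm_num) ht
      _ ≤ 2 ^ p * (1 + t ^ p) := by gcongr; linarith

theorem rpow_div_le_rpow {K M t ρ q : ℝ} (hK : 1 ≤ K) (hρ : 0 ≤ ρ) (hρq : ρ ≤ q) (ht : 0 ≤ t)
    (h : t ≤ K * M) : t ^ ρ / K ^ q ≤ M ^ ρ := by
  have hK0 : 0 < K := by linarith
  calc t ^ ρ / K ^ q ≤ t ^ ρ / K ^ ρ := by gcongr
    _ = (t / K) ^ ρ := (Real.div_rpow ht hK0.le ρ).symm
    _ ≤ M ^ ρ := Real.rpow_le_rpow (by positivity) (by rwa [div_le_iff₀' hK0]) hρ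

theorem one_add_le_mul_max {a r t : ℝ} (ha : 0 ≤ a) (hr : 0 < r) :
    1 + t ≤ (4 * (1 + a + r) / r + 1) * max (r / 4) (t - a - r) := by
  have hK : 4 * (1 + a + r) / r * (r / 4) = 1 + a + r := by field_simp
  have h1 := le_max_left (r / 4) (t - a - r)
  have h2 := le_max_right (r / 4) (t - a - r)
  have h3 : 4 * (1 + a + r) / r * (r / 4) ≤ 4 * (1 + a + r) / r * max (r / 4) (t - a - r) :=
    mul_le_mul_of_nonneg_left h1 (by positivity)
  rcases le_total (t - a - r) (r / 4) with h | h <;> nlinarith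

theorem one_add_rpow_div_le_max_rpow {a r t ρ q : ℝ} (ha : 0 ≤ a) (hr : 0 < r) (ht : 0 ≤ t)
    (hρ : 0 ≤ ρ) (hρq : ρ ≤ q) :
    (1 + t) ^ ρ / (4 * (1 + a + r) / r + 1) ^ q ≤ max (r / 4) (t - a - r) ^ ρ :=
  rpow_div_le_rpow (le_add_of_nonneg_left (by positivity)) hρ hρq (by positivity)
    (one_add_le_mul_max ha hr)

theorem one_add_rpow_div_mul_min_le {a r t s γ : ℝ} (ha : 0 ≤ a) (hr : 0 < r) (ht : 0 ≤ t)
    (hγ : 0 ≤ γ) (hs : r / 4 ≤ s) :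
    (1 + t) ^ γ / (4 * (1 + a + r) / r + 1) ^ (γ + 2) * min ((r / 4) ^ 2) 1
      ≤ max s (t - a - r) ^ γ * s ^ 2 :=
  calc _ ≤ max (r / 4) (t - a - r) ^ γ * (r / 4) ^ 2 :=
        mul_le_mul (one_add_rpow_div_le_max_rpow ha hr ht hγ (by linarith)) (min_le_left _ _)
          (by positivity) (by positivity)
    _ ≤ _ := by
        have hL : 0 ≤ max s (t - a - r) := (le_max_left _ _).trans' (by linarith)
        gcongr

theorem one_add_rpow_add_two_div_mul_min_le {a r t s γ : ℝ} (ha : 0 ≤ a) (hr : 0 < r)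
    (ht : 0 ≤ t) (hγ : 0 ≤ γ) (hs : max (r / 4) (t - a - r) ≤ s) :
    (1 + t) ^ (γ + 2) / (4 * (1 + a + r) / r + 1) ^ (γ + 2) * min ((r / 4) ^ 2) 1
      ≤ max s (t - a - r) ^ γ * s ^ 2 :=
  calc _ ≤ max (r / 4) (t - a - r) ^ (γ + 2) * 1 :=
        mul_le_mul (one_add_rpow_div_le_max_rpow ha hr ht (by linarith) le_rfl)
          (min_le_right _ _) (by positivity) (by positivity)
    _ = max (r / 4) (t - a - r) ^ γ * max (r / 4) (t - a - r) ^ 2 := by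
        rw [mul_one, Real.rpow_add (by positivity), Real.rpow_two]
    _ ≤ _ := by
        have hs0 : 0 ≤ s := hs.trans' ((le_max_left _ _).trans' (by positivity))
        gcongr
        exact (le_max_left _ _).trans hs

section NormedGroup

variable {G : Type*} [NormedAddCommGroup G]

theorem rpow_norm_le_mul_one_add_rpow_norm_sub (v w : G) {p : ℝ} (hp : 0 ≤ p) :
    ‖w‖ ^ p ≤ 2 ^ p * (1 + ‖v‖) ^ p * (1 + ‖v - w‖ ^ p) := by
  have h : ‖w‖ ≤ (1 + ‖v‖) * (1 + ‖v - w‖) := by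
    have := norm_sub_le v (v - w)
    rw [sub_sub_cancel] at this
    nlinarith [norm_nonneg v, norm_nonneg (v - w)]
  calc ‖w‖ ^ p ≤ ((1 + ‖v‖) * (1 + ‖v - w‖)) ^ p := Real.rpow_le_rpow (norm_nonneg _) h hp
    _ = (1 + ‖v‖) ^ p * (1 + ‖v - w‖) ^ p := Real.mul_rpow (by positivity) (by positivity)
    _ ≤ (1 + ‖v‖) ^ p * (2 ^ p * (1 + ‖v - w‖ ^ p)) := by
        gcongr; exact one_add_rpow_le (norm_nonneg _) hp
    _ = 2 ^ p * (1 + ‖v‖) ^ p * (1 + ‖v - w‖ ^ p) := by ring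

theorem MeasureTheory.Integrable.rpow_norm_mul_comp_sub [MeasurableSpace G] [BorelSpace G]
    {μ : Measure G} [μ.IsAddLeftInvariant] [μ.IsNegInvariant] {f : G → ℝ} {p : ℝ} (hp : 0 ≤ p)
    (hf : Integrable (fun w => (1 + ‖w‖ ^ p) * f w) μ) (v : G) :
    Integrable (fun w => ‖w‖ ^ p * f (v - w)) μ := by
  have hden : ∀ w : G, 0 < 1 + ‖v - w‖ ^ p := fun w => by positivity
  have hweight : Continuous fun w : G => ‖w‖ ^ p / (1 + ‖v - w‖ ^ p) :=
    (continuous_norm.rpow_const fun _ => Or.inr hp).div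
      (continuous_const.add ((continuous_const.sub continuous_id).norm.rpow_const
        fun _ => Or.inr hp)) fun w => (hden w).ne'
  refine ((hf.comp_sub_left v).bdd_mul hweight.aestronglyMeasurable
    (c := 2 ^ p * (1 + ‖v‖) ^ p) (ae_of_all _ fun w => ?_)).congr (ae_of_all _ fun w => ?_)
  · rw [Real.norm_of_nonneg (by positivity), div_le_iff₀ (hden w)]
    exact rpow_norm_le_mul_one_add_rpow_norm_sub v w hp
  · have := (hden w).ne'
    field_simp

end NormedGroup

section InnerProductSpace

variable {E : Type*} [NormedAddCommGroup E] [InnerProductSpace ℝ E]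

theorem norm_sq_mul_inner_sq_le {ξ u : E} (hu : ‖u‖ = 1) (hξu : ⟪ξ, u⟫ = 0) (w : E) :
    ‖ξ‖ ^ 2 * ⟪w, u⟫ ^ 2 ≤ ‖ξ‖ ^ 2 * ‖w‖ ^ 2 - ⟪w, ξ⟫ ^ 2 := by
  have hcs := real_inner_mul_inner_self_le (w - ⟪w, u⟫ • u) ξ
  simp only [inner_sub_left, inner_sub_right, real_inner_smul_left, real_inner_smul_right,
    real_inner_comm ξ u, real_inner_comm w u, hξu, real_inner_self_eq_norm_sq, norm_smul,
    Real.norm_eq_abs, mul_pow, sq_abs, hu] at hcs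
  nlinarith

theorem norm_sub_lt_and_inner_add_le_of_mem_ball {u z w : E} {r : ℝ} (hu : ‖u‖ = 1)
    (hw : w ∈ Metric.ball (z + (r / 2) • u) (r / 4)) :
    ‖w - z‖ < r ∧ ⟪z, u⟫ + r / 4 ≤ ⟪w, u⟫ := by
  rw [Metric.mem_ball, dist_eq_norm] at hw
  have hpos : 0 < r := by linarith [norm_nonneg (w - (z + (r / 2) • u))]
  have hwz : w - z = (w - (z + (r / 2) • u)) + (r / 2) • u := by abel
  constructor
  · rw [hwz]
    calc _ ≤ ‖w - (z + (r / 2) • u)‖ + ‖(r / 2) • u‖ := norm_add_le _ _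
      _ < r := by rw [norm_smul, hu, Real.norm_of_nonneg (by positivity)]; linarith
  · have hinner : ⟪w, u⟫ = ⟪w - (z + (r / 2) • u), u⟫ + ⟪z, u⟫ + r / 2 := by
      rw [inner_sub_left, inner_add_left, real_inner_smul_left, real_inner_self_eq_norm_sq, hu]
      ring
    have := (abs_le.mp ((abs_real_inner_le_norm (w - (z + (r / 2) • u)) u).trans_eq
      (by rw [hu, mul_one]))).1
    linarith

theorem sub_norm_le_of_inner_sub_le {v v₀ : E} {c : ℝ} (hc : 0 ≤ c)
    (h : ⟪v - v₀, v⟫ ≤ c * ‖v‖) : ‖v‖ - ‖v₀‖ ≤ c := by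
  rcases (norm_nonneg v).eq_or_lt with hv | hv
  · linarith [norm_nonneg v₀]
  have hv₀ : ⟪v₀, v⟫ ≤ ‖v₀‖ * ‖v‖ := real_inner_le_norm v₀ v
  rw [inner_sub_left, real_inner_self_eq_norm_sq] at h
  nlinarith

theorem exists_norm_eq_one_inner_eq_zero_forall_inner_le [FiniteDimensional ℝ E]
    (hE : 2 ≤ Module.finrank ℝ E) (ξ z : E) :
    ∃ u : E, ‖u‖ = 1 ∧ ⟪ξ, u⟫ = 0 ∧ 0 ≤ ⟪z, u⟫ ∧
      ∀ y, ⟪ξ, y⟫ = 0 → ⟪z, y⟫ ≤ ⟪z, u⟫ * ‖y‖ := by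
  set S : Set E := Metric.sphere 0 1 ∩ {y | ⟪ξ, y⟫ = 0}
  have hS : IsCompact S :=
    (isCompact_sphere 0 1).inter_right (isClosed_eq (by fun_prop) continuous_const)
  have hne : S.Nonempty := by
    have hspan : Module.finrank ℝ (ℝ ∙ ξ) ≤ 1 := by
      simpa using finrank_span_le_card (R := ℝ) ({ξ} : Set E)
    have := (ℝ ∙ ξ).finrank_add_finrank_orthogonal
    obtain ⟨⟨y, hy⟩, hy0⟩ := Module.finrank_pos_iff_exists_ne_zero.mp
      (by omega : 0 < Module.finrank ℝ (ℝ ∙ ξ)ᗮ)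
    have hy0 : y ≠ 0 := fun h => hy0 (by simp [h])
    refine ⟨‖y‖⁻¹ • y, by simp [norm_smul, hy0], ?_⟩
    simp [real_inner_smul_right, Submodule.mem_orthogonal_singleton_iff_inner_right.mp hy]
  obtain ⟨u, ⟨hu, hξu⟩, hmax⟩ := hS.exists_isMaxOn hne (f := fun y => ⟪z, y⟫) (by fun_prop)
  rw [mem_sphere_zero_iff_norm] at hu
  have key : ∀ y, ⟪ξ, y⟫ = 0 → ⟪z, y⟫ ≤ ⟪z, u⟫ * ‖y‖ := by
    intro y hy
    rcases eq_or_ne y 0 with rfl | hy0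
    · simp
    have hmem : ‖y‖⁻¹ • y ∈ S :=
      ⟨by simp [norm_smul, hy0], by simp [real_inner_smul_right, hy]⟩
    have : ‖y‖⁻¹ * ⟪z, y⟫ ≤ ⟪z, u⟫ := by simpa [real_inner_smul_right] using hmax hmem
    rwa [inv_mul_le_iff₀ (norm_pos_iff.mpr hy0), mul_comm] at this
  refine ⟨u, hu, hξu, ?_, key⟩
  have := key (-u) (by simpa using hξu)
  rw [inner_neg_right, norm_neg, hu] at this
  linarith

noncomputable def quadFormIntegrand (γ : ℝ) (f : E → ℝ) (v ξ w : E) : ℝ :=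
  ‖w‖ ^ γ * (‖ξ‖ ^ 2 * ‖w‖ ^ 2 - ⟪w, ξ⟫ ^ 2) * f (v - w)

theorem quadFormIntegrand_nonneg {γ : ℝ} {f : E → ℝ} (hf0 : ∀ v, 0 ≤ f v) (v ξ w : E) :
    0 ≤ quadFormIntegrand γ f v ξ w := by
  have hcs := real_inner_mul_inner_self_le w ξ
  rw [real_inner_self_eq_norm_sq, real_inner_self_eq_norm_sq] at hcs
  have : 0 ≤ ‖ξ‖ ^ 2 * ‖w‖ ^ 2 - ⟪w, ξ⟫ ^ 2 := by nlinarith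
  have := hf0 (v - w)
  unfold quadFormIntegrand
  positivity

theorem le_integral_quadFormIntegrand [MeasurableSpace E] [BorelSpace E] [FiniteDimensional ℝ E]
    (μ : Measure E) [μ.IsAddHaarMeasure] {γ δ r : ℝ} (hγ : 0 ≤ γ) {f : E → ℝ}
    (hf0 : ∀ v, 0 ≤ f v) {v₀ : E} (hlow : ∀ v, ‖v - v₀‖ < r → δ ≤ f v) {v ξ u : E}
    (hint : Integrable (quadFormIntegrand γ f v ξ) μ) (hu : ‖u‖ = 1) (hξu : ⟪ξ, u⟫ = 0)
    (hzu : 0 ≤ ⟪v - v₀, u⟫) :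
    δ * ‖ξ‖ ^ 2 * μ.real (Metric.ball 0 (r / 4)) *
        (max (⟪v - v₀, u⟫ + r / 4) (‖v‖ - ‖v₀‖ - r) ^ γ * (⟪v - v₀, u⟫ + r / 4) ^ 2)
      ≤ ∫ w, quadFormIntegrand γ f v ξ w ∂μ := by
  set s := ⟪v - v₀, u⟫ + r / 4
  set L := max s (‖v‖ - ‖v₀‖ - r)
  set B := Metric.ball (v - v₀ + (r / 2) • u) (r / 4)
  have hpt : ∀ w ∈ B, δ * ‖ξ‖ ^ 2 * (L ^ γ * s ^ 2) ≤ quadFormIntegrand γ f v ξ w := by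
    intro w hw
    obtain ⟨hnear, hsw⟩ := norm_sub_lt_and_inner_add_le_of_mem_ball hu hw
    have hr : 0 < r := (norm_nonneg _).trans_lt hnear
    have hs : 0 ≤ s := by positivity
    have hfar : ‖v - w - v₀‖ < r := by
      rwa [show v - w - v₀ = -(w - (v - v₀)) by abel, norm_neg]
    have hwu : ⟪w, u⟫ ≤ ‖w‖ := (real_inner_le_norm w u).trans_eq (by rw [hu, mul_one])
    have hLw : L ≤ ‖w‖ := by
      refine max_le (hsw.trans hwu) ?_
      have := norm_sub_norm_le v w
      have := norm_sub_norm_le (v - w) v₀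
      linarith
    have hξs : ‖ξ‖ ^ 2 * s ^ 2 ≤ ‖ξ‖ ^ 2 * ‖w‖ ^ 2 - ⟪w, ξ⟫ ^ 2 :=
      (mul_le_mul_of_nonneg_left (pow_le_pow_left₀ hs hsw 2) (by positivity)).trans
        (norm_sq_mul_inner_sq_le hu hξu w)
    have hfw := hf0 (v - w)
    calc δ * ‖ξ‖ ^ 2 * (L ^ γ * s ^ 2) = δ * (L ^ γ * (‖ξ‖ ^ 2 * s ^ 2)) := by ring
      _ ≤ f (v - w) * (L ^ γ * (‖ξ‖ ^ 2 * s ^ 2)) := by gcongr; exact hlow _ hfar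
      _ ≤ f (v - w) * (‖w‖ ^ γ * (‖ξ‖ ^ 2 * ‖w‖ ^ 2 - ⟪w, ξ⟫ ^ 2)) := by gcongr
      _ = quadFormIntegrand γ f v ξ w := by unfold quadFormIntegrand; ring
  have hset := setIntegral_ge_of_const_le_real measurableSet_ball measure_ball_lt_top.ne hpt
    hint.integrableOn
  rw [Measure.real, Measure.addHaar_ball_center] at hset
  calc _ = δ * ‖ξ‖ ^ 2 * (L ^ γ * s ^ 2) * μ.real (Metric.ball 0 (r / 4)) := by ring
    _ ≤ ∫ w in B, quadFormIntegrand γ f v ξ w ∂μ := hset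
    _ ≤ ∫ w, quadFormIntegrand γ f v ξ w ∂μ :=
      setIntegral_le_integral hint (ae_of_all _ (quadFormIntegrand_nonneg hf0 v ξ))

end InnerProductSpace

section Euclidean

variable {ι : Type*} [Fintype ι] [DecidableEq ι]

theorem abs_ite_sub_mul_div_norm_sq_le (w : EuclideanSpace ℝ ι) (i j : ι) :
    |(if i = j then (1 : ℝ) else 0) - w i * w j / ‖w‖ ^ 2| ≤ 2 := by
  have hij : |w i * w j| ≤ ‖w‖ ^ 2 := by
    rw [abs_mul, sq]
    exact mul_le_mul (PiLp.norm_apply_le w i) (PiLp.norm_apply_le w j) (abs_nonneg _)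
      (norm_nonneg _)
  have hdiv : |w i * w j / ‖w‖ ^ 2| ≤ 1 := by
    rw [abs_div, abs_of_nonneg (by positivity : (0 : ℝ) ≤ ‖w‖ ^ 2)]
    exact div_le_one_of_le₀ hij (by positivity)
  have hite : |(if i = j then (1 : ℝ) else 0)| ≤ 1 := by split_ifs <;> norm_num
  linarith [abs_sub (if i = j then (1 : ℝ) else 0) (w i * w j / ‖w‖ ^ 2)]

theorem sum_sum_ite_sub_mul_div_norm_sq (w ξ : EuclideanSpace ℝ ι) :
    ∑ i, ∑ j, ((if i = j then (1 : ℝ) else 0) - w i * w j / ‖w‖ ^ 2) * ξ i * ξ j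
      = ‖ξ‖ ^ 2 - ⟪w, ξ⟫ ^ 2 / ‖w‖ ^ 2 := by
  simp only [sub_mul, Finset.sum_sub_distrib, ite_mul, one_mul, zero_mul, Finset.sum_ite_eq,
    Finset.mem_univ, if_true, PiLp.inner_apply, RCLike.inner_apply, conj_trivial]
  rw [EuclideanSpace.real_norm_sq_eq ξ, sq (∑ i, _), Finset.sum_mul_sum, Finset.sum_div]
  congr 1
  · simp only [sq]
  · refine Finset.sum_congr rfl fun i _ => ?_
    rw [Finset.sum_div]
    exact Finset.sum_congr rfl fun j _ => by ring

variable {γ : ℝ} {f : EuclideanSpace ℝ ι → ℝ}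

-- At `w = 0` both sides vanish: there `w i * w j / ‖w‖ ^ 2 = 0 / 0 = 0` and `‖w‖ ^ (γ + 2) = 0`.
theorem sum_sum_entryIntegrand_mul_eq_quadFormIntegrand (hγ : γ ≠ -2)
    (v ξ : EuclideanSpace ℝ ι) :
    (fun w : EuclideanSpace ℝ ι => ∑ i, ∑ j,
      ((if i = j then (1 : ℝ) else 0) - w i * w j / ‖w‖ ^ 2) * ‖w‖ ^ (γ + 2) * f (v - w)
        * ξ i * ξ j) = quadFormIntegrand γ f v ξ := by
  funext w
  have hfactor : ∀ i j, ((if i = j then (1 : ℝ) else 0) - w i * w j / ‖w‖ ^ 2) * ‖w‖ ^ (γ + 2)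
      * f (v - w) * ξ i * ξ j
        = ((if i = j then (1 : ℝ) else 0) - w i * w j / ‖w‖ ^ 2) * ξ i * ξ j
          * (‖w‖ ^ (γ + 2) * f (v - w)) := fun i j => by ring
  simp only [hfactor, ← Finset.sum_mul, sum_sum_ite_sub_mul_div_norm_sq, quadFormIntegrand]
  rcases eq_or_ne w 0 with rfl | hw
  · simp [Real.zero_rpow (show γ + 2 ≠ 0 by contrapose! hγ; linarith)]
  · rw [Real.rpow_add (norm_pos_iff.mpr hw), Real.rpow_two]
    field_simp

theorem integrable_entryIntegrand (hγ : -2 ≤ γ)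
    (hf : Integrable (fun w => (1 + ‖w‖ ^ (γ + 2)) * f w)) (v : EuclideanSpace ℝ ι) (i j : ι) :
    Integrable fun w : EuclideanSpace ℝ ι =>
      ((if i = j then (1 : ℝ) else 0) - w i * w j / ‖w‖ ^ 2) * ‖w‖ ^ (γ + 2) * f (v - w) := by
  have hcoef : Measurable fun w : EuclideanSpace ℝ ι =>
      (if i = j then (1 : ℝ) else 0) - w i * w j / ‖w‖ ^ 2 := by fun_prop
  refine ((hf.rpow_norm_mul_comp_sub (by linarith) v).bdd_mul hcoef.aestronglyMeasurable
    (c := 2) (ae_of_all _ fun w => abs_ite_sub_mul_div_norm_sq_le w i j)).congr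
    (ae_of_all _ fun w => ?_)
  simp only [mul_assoc]

theorem integrable_quadFormIntegrand (hγ : -2 < γ)
    (hf : Integrable (fun w => (1 + ‖w‖ ^ (γ + 2)) * f w)) (v ξ : EuclideanSpace ℝ ι) :
    Integrable (quadFormIntegrand γ f v ξ) := by
  rw [← sum_sum_entryIntegrand_mul_eq_quadFormIntegrand hγ.ne']
  exact integrable_finsetSum _ fun i _ => integrable_finsetSum _ fun j _ =>
    ((integrable_entryIntegrand hγ.le hf v i j).mul_const (ξ i)).mul_const (ξ j)

end Euclidean

section Abar

variable {γ : ℝ} {f : EuclideanSpace ℝ (Fin 3) → ℝ}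

theorem sum_sum_abarEntry_mul_eq_integral (hγ : -2 < γ)
    (hf : Integrable (fun w => (1 + ‖w‖ ^ (γ + 2)) * f w)) (aγ : ℝ)
    (v ξ : EuclideanSpace ℝ (Fin 3)) :
    ∑ i, ∑ j, abarEntry aγ γ f v i j * ξ i * ξ j
      = aγ * ∫ w, quadFormIntegrand γ f v ξ w := by
  have hint := fun i j =>
    ((integrable_entryIntegrand hγ.le hf v i j).mul_const (ξ i)).mul_const (ξ j)
  rw [← sum_sum_entryIntegrand_mul_eq_quadFormIntegrand hγ.ne', integral_finsetSum _ fun i _ =>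
    integrable_finsetSum _ fun j _ => hint i j, Finset.mul_sum]
  refine Finset.sum_congr rfl fun i _ => ?_
  rw [integral_finsetSum _ fun j _ => hint i j, Finset.mul_sum]
  refine Finset.sum_congr rfl fun j _ => ?_
  rw [abarEntry, integral_mul_const, integral_mul_const]
  ring

theorem le_sum_sum_abarEntry_mul {aγ δ r : ℝ} (hγ : 0 ≤ γ) (ha : 0 ≤ aγ) (hδ : 0 ≤ δ)
    (hf0 : ∀ v, 0 ≤ f v) (hf : Integrable (fun w => (1 + ‖w‖ ^ (γ + 2)) * f w))
    {v₀ : EuclideanSpace ℝ (Fin 3)} (hlow : ∀ v, ‖v - v₀‖ < r → δ ≤ f v)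
    {v ξ u : EuclideanSpace ℝ (Fin 3)} (hu : ‖u‖ = 1) (hξu : ⟪ξ, u⟫ = 0)
    (hzu : 0 ≤ ⟪v - v₀, u⟫) {c : ℝ}
    (hc : c ≤ max (⟪v - v₀, u⟫ + r / 4) (‖v‖ - ‖v₀‖ - r) ^ γ * (⟪v - v₀, u⟫ + r / 4) ^ 2) :
    aγ * δ * volume.real (Metric.ball (0 : EuclideanSpace ℝ (Fin 3)) (r / 4)) * c * ‖ξ‖ ^ 2
      ≤ ∑ i, ∑ j, abarEntry aγ γ f v i j * ξ i * ξ j := by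
  rw [sum_sum_abarEntry_mul_eq_integral (by linarith) hf]
  calc _ = aγ * (δ * ‖ξ‖ ^ 2 *
        volume.real (Metric.ball (0 : EuclideanSpace ℝ (Fin 3)) (r / 4)) * c) := by ring
    _ ≤ aγ * ∫ w, quadFormIntegrand γ f v ξ w := by
      gcongr
      refine le_trans ?_ (le_integral_quadFormIntegrand volume hγ hf0 hlow
        (integrable_quadFormIntegrand (by linarith) hf v ξ) hu hξu hzu)
      gcongr

end Abar

theorem stmt11_general (γ aγ δ r : ℝ) (hγ0 : 0 ≤ γ) (ha : 0 < aγ)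
    (hδ : 0 < δ) (hr : 0 < r) (v₀ : EuclideanSpace ℝ (Fin 3))
    (f : EuclideanSpace ℝ (Fin 3) → ℝ) (hf0 : ∀ v, 0 ≤ f v)
    (hfI : Integrable (fun w => (1 + ‖w‖ ^ (γ + 2)) * f w))
    (hlow : ∀ v, ‖v - v₀‖ < r → δ ≤ f v) :
    ∃ c₁ > (0:ℝ),
      (∀ v ξ : EuclideanSpace ℝ (Fin 3), (∃ s : ℝ, ξ = s • v) →
        c₁ * ‖ξ‖ ^ 2 * (1 + ‖v‖) ^ γ
          ≤ ∑ i, ∑ j, abarEntry aγ γ f v i j * ξ i * ξ j) ∧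
      (∀ v ξ : EuclideanSpace ℝ (Fin 3), ⟪ξ, v⟫ = (0:ℝ) →
        c₁ * ‖ξ‖ ^ 2 * (1 + ‖v‖) ^ (γ + 2)
          ≤ ∑ i, ∑ j, abarEntry aγ γ f v i j * ξ i * ξ j) := by
  have hV : 0 < volume.real (Metric.ball (0 : EuclideanSpace ℝ (Fin 3)) (r / 4)) :=
    ENNReal.toReal_pos (Metric.measure_ball_pos _ _ (by positivity)).ne' measure_ball_lt_top.ne
  have hdim : 2 ≤ Module.finrank ℝ (EuclideanSpace ℝ (Fin 3)) := by simp
  refine ⟨aγ * δ * volume.real (Metric.ball (0 : EuclideanSpace ℝ (Fin 3)) (r / 4)) *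
    (min ((r / 4) ^ 2) 1 / (4 * (1 + ‖v₀‖ + r) / r + 1) ^ (γ + 2)), by positivity, ?_, ?_⟩
  · rintro v ξ -
    obtain ⟨u, hu, hξu, hzu, -⟩ := exists_norm_eq_one_inner_eq_zero_forall_inner_le hdim ξ (v - v₀)
    exact (le_of_eq (by ring)).trans (le_sum_sum_abarEntry_mul hγ0 ha.le hδ.le hf0 hfI hlow hu hξu
      hzu (one_add_rpow_div_mul_min_le (norm_nonneg v₀) hr (norm_nonneg v) hγ0 (by linarith)))
  · intro v ξ hξv
    obtain ⟨u, hu, hξu, hzu, hmax⟩ :=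
      exists_norm_eq_one_inner_eq_zero_forall_inner_le hdim ξ (v - v₀)
    have hs : max (r / 4) (‖v‖ - ‖v₀‖ - r) ≤ ⟪v - v₀, u⟫ + r / 4 :=
      max_le (by linarith) (by linarith [sub_norm_le_of_inner_sub_le hzu (hmax v hξv)])
    exact (le_of_eq (by ring)).trans (le_sum_sum_abarEntry_mul hγ0 ha.le hδ.le hf0 hfI hlow hu hξu
      hzu (one_add_rpow_add_two_div_mul_min_le (norm_nonneg v₀) hr (norm_nonneg v) hγ0 hs))

/-- Lower ellipticity of `ā^f` under a local lower bound `f ≥ δ` on `B_r(v₀)`: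
the quadratic form is `≥ c₁ |ξ|² (1+|v|)^γ` for `ξ ∥ v` and
`≥ c₁ |ξ|² (1+|v|)^{γ+2}` for `ξ ⊥ v`. -/
theorem stmt11 (γ aγ δ r : ℝ) (hγ0 : 0 ≤ γ) (hγ1 : γ ≤ 1) (ha : 0 < aγ)
    (hδ : 0 < δ) (hr : 0 < r) (v₀ : EuclideanSpace ℝ (Fin 3))
    (f : EuclideanSpace ℝ (Fin 3) → ℝ) (hf0 : ∀ v, 0 ≤ f v)
    (hfI : Integrable (fun w => (1 + ‖w‖ ^ (γ + 2)) * f w))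
    (hlow : ∀ v, ‖v - v₀‖ < r → δ ≤ f v) :
    ∃ c₁ > (0:ℝ),
      (∀ v ξ : EuclideanSpace ℝ (Fin 3), (∃ s : ℝ, ξ = s • v) →
        c₁ * ‖ξ‖ ^ 2 * (1 + ‖v‖) ^ γ
          ≤ ∑ i, ∑ j, abarEntry aγ γ f v i j * ξ i * ξ j) ∧
      (∀ v ξ : EuclideanSpace ℝ (Fin 3), ⟪ξ, v⟫ = (0:ℝ) →
        c₁ * ‖ξ‖ ^ 2 * (1 + ‖v‖) ^ (γ + 2)
          ≤ ∑ i, ∑ j, abarEntry aγ γ f v i j * ξ i * ξ j) :=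
  stmt11_general γ aγ δ r hγ0 ha hδ hr v₀ f hf0 hfI hlow
end
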